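/- arXiv:2311.10040 — 2 statements merged into one kernel-verified Lean document; each statement's English description precedes it below -/
import Mathlib

section
/- Suppose binary relations R₁, R₂ ⊆ D × D over finite domain D form an incompatible block structure: R₁ has blocks (A_x, A_z) and (B_x, B_z), R₂ has blocks (C_z, C_y) and (D_z, D_y), and the four intersections A_z∩C_z, A_z∩D_z, B_z∩C_z, B_z∩D_z are all nonempty. Then the ternary constraint R(x,y,z) defined by R₁(x,z) ∧ R₂(z,y) is not blockwise decomposable in the pair x,y. -/
/-- Projection of a constraint (a set of assignments `V → D`) onto a set `Y` of
variables: the set of restrictions of solutions to `Y`. -/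
def proj {V D : Type*} (Y : Set V) (R : Set (V → D)) : Set (Y → D) :=
  {g | ∃ f ∈ R, ∀ y : Y, f y = g y}

/-- A constraint is decomposable with respect to the partition `(P, Pᶜ)` of its scope
if it is the product of its projections onto `P` and `Pᶜ`. -/
def Decomp {V D : Type*} (R : Set (V → D)) (P : Set V) : Prop :=
  ∀ f : V → D,
    f ∈ R ↔ ((fun v : P => f v) ∈ proj P R ∧ (fun v : ↥(Pᶜ) => f v) ∈ proj Pᶜ R)

/-- `R` is blockwise decomposable in the pair of variables `x, y`: the selection
matrix `M^R_{x,y}` is a proper block matrix (blocks `(A ℓ, B ℓ)`), and each block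
restriction of `R` decomposes as a product over a partition separating `x` from `y`. -/
def BlockwiseIn {V D : Type*} (R : Set (V → D)) (x y : V) : Prop :=
  ∃ (k : ℕ) (A B : Fin k → Set D),
    (∀ i j, i ≠ j → Disjoint (A i) (A j)) ∧
    (∀ i j, i ≠ j → Disjoint (B i) (B j)) ∧
    (∀ a b : D, (∃ f ∈ R, f x = a ∧ f y = b) ↔ ∃ ℓ, a ∈ A ℓ ∧ b ∈ B ℓ) ∧
    (∀ ℓ, ∃ P : Set V, x ∈ P ∧ y ∉ P ∧ Decomp {f ∈ R | f x ∈ A ℓ ∧ f y ∈ B ℓ} P)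

/-- `R` is blockwise decomposable: blockwise decomposable in every pair of
distinct scope variables. -/
def Blockwise {V D : Type*} (R : Set (V → D)) : Prop :=
  ∀ x y : V, x ≠ y → BlockwiseIn R x y

/-- `(A, B)` is a block of the binary relation `S ⊆ D × D`: the rows in `A` have
their nonempty entries exactly in the columns `B` and vice versa, and both sides
are nonempty. -/
def IsBlock {D : Type*} (S : Set (D × D)) (A B : Set D) : Prop :=
  A.Nonempty ∧ B.Nonempty ∧
  (∀ a ∈ A, ∀ b ∈ B, (a, b) ∈ S) ∧
  (∀ a ∈ A, ∀ b, (a, b) ∈ S → b ∈ B) ∧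
  (∀ b ∈ B, ∀ a, (a, b) ∈ S → a ∈ A)

/-!
Pick `a ∈ Ax`, `a' ∈ Bx`, `b ∈ Cy`, `b' ∈ Dy` and witnesses `cᵢ` of the four intersections.
The solutions `(a, b, c₁)`, `(a, b', c₂)`, `(a', b, c₃)`, `(a', b', c₄)` link all four pairs
`(a|a', b|b')` into one block of the selection matrix, whose restriction would then be
closed under mixing along some partition `P ∋ x`, `P ∌ y`. If `z ∈ P`, mixing
`(a, b, c₁)` with `(a', b', c₄)` yields `(a, b', c₁)`, impossible as `c₁ ∈ Cz` but `b' ∉ Cy`;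
if `z ∉ P`, mixing `(a, b, c₁)` with `(a', b, c₃)` yields `(a, b, c₃)`, impossible as
`a ∈ Ax` but `c₃ ∉ Az`.
-/

open Set

section

variable {V D : Type*}

theorem Decomp.mem_of_eqOn {S : Set (V → D)} {P : Set V} (hS : Decomp S P) {f g k : V → D}
    (hf : f ∈ S) (hg : g ∈ S) (hkf : EqOn k f P) (hkg : EqOn k g Pᶜ) : k ∈ S :=
  (hS k).2 ⟨⟨f, hf, fun v => (hkf v.2).symm⟩, ⟨g, hg, fun v => (hkg v.2).symm⟩⟩

/-- The joining solution `h` forces `f` and `g` into the same block. -/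
theorem BlockwiseIn.exists_mixing_set {R : Set (V → D)} {x y : V} (hR : BlockwiseIn R x y)
    {f : V → D} (hf : f ∈ R) :
    ∃ P : Set V, x ∈ P ∧ y ∉ P ∧ ∀ g ∈ R, (∃ h ∈ R, h x = f x ∧ h y = g y) →
      ∀ k : V → D, EqOn k f P → EqOn k g Pᶜ → k ∈ R := by
  obtain ⟨n, A, B, hA, hB, hblocks, hdecomp⟩ := hR
  have block_of_mem : ∀ h ∈ R, ∃ ℓ, h x ∈ A ℓ ∧ h y ∈ B ℓ :=
    fun h hh => (hblocks _ _).1 ⟨h, hh, rfl, rfl⟩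
  have index_unique : ∀ (C : Fin n → Set D), (∀ i j, i ≠ j → Disjoint (C i) (C j)) →
      ∀ {i j d}, d ∈ C i → d ∈ C j → i = j :=
    fun C hC i j _ hi hj => by_contra fun hij => disjoint_left.1 (hC i j hij) hi hj
  obtain ⟨i, hfx, hfy⟩ := block_of_mem f hf
  obtain ⟨P, hxP, hyP, hP⟩ := hdecomp i
  refine ⟨P, hxP, hyP, fun g hg ⟨h, hh, hhx, hhy⟩ k hkf hkg => ?_⟩
  obtain ⟨j, hgx, hgy⟩ := block_of_mem g hg
  obtain ⟨m, hhx', hhy'⟩ := block_of_mem h hh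
  obtain rfl : i = m := index_unique A hA hfx (hhx ▸ hhx')
  obtain rfl : j = i := index_unique B hB hgy (hhy ▸ hhy')
  exact (hP.mem_of_eqOn ⟨hf, hfx, hfy⟩ ⟨hg, hgx, hgy⟩ hkf hkg).1

end

theorem stmt_15_general {D : Type*} (R₁ R₂ : Set (D × D))
    (Ax Az Bx Bz Cz Cy Dz Dy : Set D)
    (hA : IsBlock R₁ Ax Az) (hB : IsBlock R₁ Bx Bz)
    (hC : IsBlock R₂ Cz Cy) (hD : IsBlock R₂ Dz Dy)
    (hABz : Disjoint Az Bz)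
    (hCDy : Disjoint Cy Dy)
    (h1 : (Az ∩ Cz).Nonempty) (h2 : (Az ∩ Dz).Nonempty)
    (h3 : (Bz ∩ Cz).Nonempty) (h4 : (Bz ∩ Dz).Nonempty) :
    ¬ BlockwiseIn {f : Fin 3 → D | (f 0, f 2) ∈ R₁ ∧ (f 2, f 1) ∈ R₂} 0 1 := by
  intro hR
  obtain ⟨⟨a, ha⟩, -, hAmem, hAcol, -⟩ := hA
  obtain ⟨⟨a', ha'⟩, -, hBmem, -, -⟩ := hB
  obtain ⟨-, ⟨b, hb⟩, hCmem, hCcol, -⟩ := hC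
  obtain ⟨-, ⟨b', hb'⟩, hDmem, -, -⟩ := hD
  obtain ⟨c₁, hc₁A, hc₁C⟩ := h1
  obtain ⟨c₂, hc₂A, hc₂D⟩ := h2
  obtain ⟨c₃, hc₃B, hc₃C⟩ := h3
  obtain ⟨c₄, hc₄B, hc₄D⟩ := h4
  obtain ⟨P, h0P, h1P, hmix⟩ := hR.exists_mixing_set (f := ![a, b, c₁])
    ⟨hAmem a ha c₁ hc₁A, hCmem c₁ hc₁C b hb⟩
  by_cases h2P : (2 : Fin 3) ∈ P
  · have hmixed := hmix ![a', b', c₄] ⟨hBmem a' ha' c₄ hc₄B, hDmem c₄ hc₄D b' hb'⟩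
      ⟨![a, b', c₂], ⟨hAmem a ha c₂ hc₂A, hDmem c₂ hc₂D b' hb'⟩, rfl, rfl⟩
      ![a, b', c₁] (fun v _ => by fin_cases v <;> simp_all)
      (fun v _ => by fin_cases v <;> simp_all)
    exact disjoint_left.1 hCDy (hCcol c₁ hc₁C b' hmixed.2) hb'
  · have hmixed := hmix ![a', b, c₃] ⟨hBmem a' ha' c₃ hc₃B, hCmem c₃ hc₃C b hb⟩
      ⟨![a, b, c₁], ⟨hAmem a ha c₁ hc₁A, hCmem c₁ hc₁C b hb⟩, rfl, rfl⟩
      ![a, b, c₃] (fun v _ => by fin_cases v <;> simp_all)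
      (fun v _ => by fin_cases v <;> simp_all)
    exact disjoint_left.1 hABz (hAcol a ha c₃ hmixed.1) hc₃B

theorem stmt_15 {D : Type*} [Fintype D] (R₁ R₂ : Set (D × D))
    (Ax Az Bx Bz Cz Cy Dz Dy : Set D)
    (hA : IsBlock R₁ Ax Az) (hB : IsBlock R₁ Bx Bz)
    (hC : IsBlock R₂ Cz Cy) (hD : IsBlock R₂ Dz Dy)
    (hABx : Disjoint Ax Bx) (hABz : Disjoint Az Bz)
    (hCDz : Disjoint Cz Dz) (hCDy : Disjoint Cy Dy)
    (h1 : (Az ∩ Cz).Nonempty) (h2 : (Az ∩ Dz).Nonempty)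
    (h3 : (Bz ∩ Cz).Nonempty) (h4 : (Bz ∩ Dz).Nonempty) :
    ¬ BlockwiseIn {f : Fin 3 → D | (f 0, f 2) ∈ R₁ ∧ (f 2, f 1) ∈ R₂} 0 1 :=
  stmt_15_general R₁ R₂ Ax Az Bx Bz Cz Cy Dz Dy hA hB hC hD hABz hCDy h1 h2 h3 h4
end

section
/- If a constraint R(u⃗) over finite domain D decomposes, with respect to every variable x in a set C and every variable y outside C, as a product over some partition (V_{x,y}, W_{x,y}) with x ∈ V_{x,y}, y ∈ W_{x,y}, and moreover whenever V_{x,y} contains one variable of C it contains all of C, then R(u⃗) = π_C(R(u⃗)) × π_{ũ∖C}(R(u⃗)). -/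
/-!
Decomposability of `R` along `P` says exactly that `R` is closed under splicing two solutions,
taking the coordinates in `P` from the first and the others from the second. Splicing along
`P ∩ Q` is splicing along `P` with a splice along `Q`, so decomposability is preserved by finite
intersections. Fixing `x ∈ C`, each partition `P_{x,y}` with `y ∉ C` contains all of `C` and misses
`y`, so `C` is the intersection of these finitely many sets.
-/

section

variable {V D : Type*} {R : Set (V → D)}

theorem decomp_iff_piecewise_mem {P : Set V} [∀ v, Decidable (v ∈ P)] :
    Decomp R P ↔ ∀ g ∈ R, ∀ h ∈ R, P.piecewise g h ∈ R := by
  constructor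
  · intro hd g hg h hh
    rw [hd]
    exact ⟨⟨g, hg, fun v => (Set.piecewise_eq_of_mem _ _ _ v.2).symm⟩,
      ⟨h, hh, fun v => (Set.piecewise_eq_of_notMem _ _ _ v.2).symm⟩⟩
  · intro hsplice f
    refine ⟨fun hf => ⟨⟨f, hf, fun _ => rfl⟩, ⟨f, hf, fun _ => rfl⟩⟩, ?_⟩
    rintro ⟨⟨g, hg, hgf⟩, ⟨h, hh, hhf⟩⟩
    convert hsplice g hg h hh using 1
    funext v
    by_cases hv : v ∈ P
    · rw [Set.piecewise_eq_of_mem _ _ _ hv, hgf ⟨v, hv⟩]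
    · rw [Set.piecewise_eq_of_notMem _ _ _ hv, hhf ⟨v, hv⟩]

variable (R) in
theorem decomp_univ : Decomp R Set.univ := by
  classical
  rw [decomp_iff_piecewise_mem]
  intro g hg h _
  rwa [Set.piecewise_univ]

theorem Decomp.inter {P Q : Set V} (hP : Decomp R P) (hQ : Decomp R Q) : Decomp R (P ∩ Q) := by
  classical
  rw [decomp_iff_piecewise_mem] at *
  intro g hg h hh
  have hsplice : (P ∩ Q).piecewise g h = P.piecewise (Q.piecewise g h) h := by
    funext v
    by_cases hvP : v ∈ P <;> by_cases hvQ : v ∈ Q <;> simp [Set.piecewise, hvP, hvQ]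
  rw [hsplice]
  exact hP _ (hQ g hg h hh) h hh

theorem Decomp.iInter {ι : Type*} [Finite ι] {P : ι → Set V} (hP : ∀ i, Decomp R (P i)) :
    Decomp R (⋂ i, P i) := by
  cases nonempty_fintype ι
  change Decomp R (⨅ i, P i)
  rw [← Finset.inf_univ_eq_iInf]
  exact Finset.inf_induction (decomp_univ R) (fun _ h₁ _ h₂ => h₁.inter h₂) fun i _ => hP i

end

theorem stmt_19_general {V D : Type*} [Fintype V] (R : Set (V → D))
    (C : Set V) (hne : C.Nonempty)
    (h : ∀ x ∈ C, ∀ y ∈ Cᶜ, ∃ P : Set V,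
      x ∈ P ∧ y ∉ P ∧ Decomp R P ∧ ((∃ c ∈ C, c ∈ P) → C ⊆ P)) :
    Decomp R C := by
  obtain ⟨x, hx⟩ := hne
  choose P hxP hyP hdec hCP using fun y : ↥Cᶜ => h x hx y y.2
  have hC : C = ⋂ y : ↥Cᶜ, P y := by
    refine Set.Subset.antisymm (Set.subset_iInter fun y => hCP y ⟨x, hx, hxP y⟩) fun v hv => ?_
    by_contra hvC
    exact hyP ⟨v, hvC⟩ (Set.mem_iInter.mp hv ⟨v, hvC⟩)
  rw [hC]
  exact Decomp.iInter hdec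

theorem stmt_19 {V D : Type*} [Fintype V] [Fintype D] (R : Set (V → D))
    (C : Set V) (hne : C.Nonempty) (hproper : C ≠ Set.univ)
    (h : ∀ x ∈ C, ∀ y ∈ Cᶜ, ∃ P : Set V,
      x ∈ P ∧ y ∉ P ∧ Decomp R P ∧ ((∃ c ∈ C, c ∈ P) → C ⊆ P)) :
    Decomp R C :=
  stmt_19_general R C hne h
end
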